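/- (KKT necessity for convex QP under Slater's condition) Let Q be symmetric positive semidefinite and suppose there exists x̄ with Ax̄ = b and Gx̄ < h componentwise. If x* minimizes ½xᵀQx + qᵀx over {x : Gx ≤ h, Ax = b}, then there exist λ* ≥ 0 and ν* such that Qx* + q + Aᵀν* + Gᵀλ* = 0 and λ*ᵢ(Gx* − h)ᵢ = 0 for all i. -/

import Mathlib

/-!
At a minimizer `x` the gradient `c = Q x + q` is nonnegative on every direction `v` along which
`x + t v` stays feasible for small `t > 0`, since the objective changes by `t (c ⬝ᵥ v) + O(t²)`.
Slater's point makes every direction `d` of the linearized cone (`A d = 0`, `(G d)ᵢ ≤ 0` on the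
active constraints) a limit of such directions, so `c ⬝ᵥ d ≥ 0` on that cone. Farkas' lemma,
with the equality constraints handled on the kernel of `A`, then writes `-c = Aᵀ ν + Gᵀ λ` with
`λ ≥ 0` supported on the active constraints: stationarity and complementary slackness.
-/

open Matrix Filter Topology

namespace Module.Dual

variable {ι 𝕜 V : Type*} [AddCommGroup V]

theorem apply_sub_div_smul [Field 𝕜] [Module 𝕜 V] (f g : Module.Dual 𝕜 V) (x₀ x : V) :
    g (x - (f x / f x₀) • x₀) = (g - (g x₀ / f x₀) • f) x := by
  simp only [map_sub, map_smul, smul_eq_mul, LinearMap.sub_apply, LinearMap.smul_apply]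
  ring

variable [Field 𝕜] [LinearOrder 𝕜] [IsStrictOrderedRing 𝕜] [Module 𝕜 V]

/-- Farkas' lemma. -/
theorem exists_nonneg_eq_sum_smul_of_forall_nonpos (s : Finset ι) (a : ι → Module.Dual 𝕜 V)
    (c : Module.Dual 𝕜 V) (h : ∀ x, (∀ i ∈ s, a i x ≤ 0) → c x ≤ 0) :
    ∃ μ : ι → 𝕜, (∀ i, 0 ≤ μ i) ∧ c = ∑ i ∈ s, μ i • a i := by
  classical
  induction s using Finset.induction_on generalizing a c with
  | empty =>
    refine ⟨0, fun _ => le_rfl, ?_⟩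
    ext x
    simpa using le_antisymm (h x (by simp)) (by simpa using h (-x) (by simp))
  | insert j s hj ih =>
    have sum_update (μ : ι → 𝕜) (θ : 𝕜) (f : ι → Module.Dual 𝕜 V) :
        ∑ i ∈ s, Function.update μ j θ i • f i = ∑ i ∈ s, μ i • f i :=
      Finset.sum_congr rfl fun i hi => by rw [Function.update_of_ne (ne_of_mem_of_not_mem hi hj)]
    by_cases hs : ∀ x, (∀ i ∈ s, a i x ≤ 0) → c x ≤ 0
    · obtain ⟨μ, hμ, rfl⟩ := ih a c hs
      refine ⟨Function.update μ j 0, fun i => ?_, ?_⟩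
      · rcases eq_or_ne i j with rfl | hij
        · simp
        · simpa [hij] using hμ i
      · rw [Finset.sum_insert hj, sum_update, Function.update_self, zero_smul, zero_add]
    push Not at hs
    obtain ⟨x₀, hx₀s, hcx₀⟩ := hs
    have ht : 0 < a j x₀ := by
      by_contra! hle
      exact hcx₀.not_ge (h x₀ (by simpa [hle] using hx₀s))
    -- eliminate `a j` by projecting along `x₀` onto its kernel
    obtain ⟨μ, hμ, hc⟩ := ih (fun i => a i - (a i x₀ / a j x₀) • a j) (c - (c x₀ / a j x₀) • a j)
      fun x hx => by
        rw [← apply_sub_div_smul]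
        refine h _ (Finset.forall_mem_insert _ _ _ |>.2 ⟨?_, fun i hi => ?_⟩)
        · simp [ht.ne']
        · rw [apply_sub_div_smul]; exact hx i hi
    have hθ : 0 ≤ c x₀ / a j x₀ - ∑ i ∈ s, μ i * (a i x₀ / a j x₀) := by
      have : ∑ i ∈ s, μ i * (a i x₀ / a j x₀) ≤ 0 :=
        Finset.sum_nonpos fun i hi => mul_nonpos_of_nonneg_of_nonpos (hμ i)
          (div_nonpos_of_nonpos_of_nonneg (hx₀s i hi) ht.le)
      have : 0 < c x₀ / a j x₀ := div_pos hcx₀ ht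
      linarith
    refine ⟨Function.update μ j (c x₀ / a j x₀ - ∑ i ∈ s, μ i * (a i x₀ / a j x₀)),
      fun i => ?_, ?_⟩
    · rcases eq_or_ne i j with rfl | hij
      · simpa using hθ
      · simpa [hij] using hμ i
    · rw [Finset.sum_insert hj, sum_update, Function.update_self]
      conv_lhs => rw [eq_add_of_sub_eq hc]
      simp only [smul_sub, smul_smul, Finset.sum_sub_distrib, ← Finset.sum_smul]
      module

theorem exists_nonneg_eq_sum_smul_add_sum_smul_of_forall_nonpos {κ : Type*} [Fintype κ]
    (s : Finset ι) (a : ι → Module.Dual 𝕜 V) (b : κ → Module.Dual 𝕜 V) (c : Module.Dual 𝕜 V)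
    (h : ∀ x, (∀ j, b j x = 0) → (∀ i ∈ s, a i x ≤ 0) → c x ≤ 0) :
    ∃ (μ : ι → 𝕜) (ν : κ → 𝕜), (∀ i, 0 ≤ μ i) ∧ c = ∑ i ∈ s, μ i • a i + ∑ j, ν j • b j := by
  -- Farkas on the common kernel of the `b j`; the remainder vanishes there, so lies in their span
  set W := ⨅ j, LinearMap.ker (b j)
  obtain ⟨μ, hμ, hW⟩ := exists_nonneg_eq_sum_smul_of_forall_nonpos s (fun i => a i ∘ₗ W.subtype)
    (c ∘ₗ W.subtype) fun x => h x fun j => (Submodule.mem_iInf _).1 x.2 j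
  have : c - ∑ i ∈ s, μ i • a i ∈ Submodule.span 𝕜 (Set.range b) :=
    mem_span_of_iInf_ker_le_ker fun x hx => by
      simpa [sub_eq_zero] using LinearMap.congr_fun hW ⟨x, hx⟩
  obtain ⟨ν, hν⟩ := (Submodule.mem_span_range_iff_exists_fun 𝕜).1 this
  exact ⟨μ, ν, hμ, by rw [hν]; abel⟩

end Module.Dual

theorem Matrix.exists_nonneg_add_transpose_mulVec_eq_zero_of_forall
    {𝕜 ι κ n : Type*} [Field 𝕜] [LinearOrder 𝕜] [IsStrictOrderedRing 𝕜]
    [Fintype ι] [Fintype κ] [Fintype n] [DecidableEq n]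
    (G : Matrix ι n 𝕜) (A : Matrix κ n 𝕜) (s : Finset ι) (c : n → 𝕜)
    (h : ∀ d, A *ᵥ d = 0 → (∀ i ∈ s, (G *ᵥ d) i ≤ 0) → 0 ≤ c ⬝ᵥ d) :
    ∃ (lam : ι → 𝕜) (nu : κ → 𝕜), (∀ i, 0 ≤ lam i) ∧ (∀ i ∉ s, lam i = 0) ∧
      c + Aᵀ *ᵥ nu + Gᵀ *ᵥ lam = 0 := by
  classical
  obtain ⟨μ, ν, hμ, hc⟩ := Module.Dual.exists_nonneg_eq_sum_smul_add_sum_smul_of_forall_nonpos s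
    (fun i => dotProductEquiv 𝕜 n (G i)) (fun j => dotProductEquiv 𝕜 n (A j))
    (-dotProductEquiv 𝕜 n c) fun x hA hG => by
      simpa using h x (funext hA) hG
  simp only [← map_neg, ← map_smul, ← map_sum, ← map_add] at hc
  refine ⟨fun i => if i ∈ s then μ i else 0, ν, fun i => ?_, fun i hi => if_neg hi, ?_⟩
  · dsimp only
    split_ifs <;> simp [hμ i]
  · rw [mulVec_transpose, mulVec_transpose, vecMul_eq_sum, vecMul_eq_sum,
      neg_eq_iff_eq_neg.1 ((dotProductEquiv 𝕜 n).injective hc)]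
    simp only [ite_smul, zero_smul, Fintype.sum_ite_mem]
    abel

theorem tendsto_add_mul_nhdsGT_zero (a b : ℝ) :
    Tendsto (fun t => a + t * b) (𝓝[>] 0) (𝓝 a) :=
  ((Continuous.tendsto' (by fun_prop) 0 a (by simp))).mono_left nhdsWithin_le_nhds

theorem nonneg_of_eventually_nhdsGT_zero_nonneg_add_mul {a b : ℝ}
    (h : ∀ᶠ t in 𝓝[>] 0, 0 ≤ a + t * b) : 0 ≤ a :=
  ge_of_tendsto (tendsto_add_mul_nhdsGT_zero a b) h

theorem eventually_nhdsGT_zero_add_mul_nonpos {a b : ℝ} (ha : a ≤ 0) (hb : a = 0 → b < 0) :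
    ∀ᶠ t in 𝓝[>] 0, a + t * b ≤ 0 := by
  rcases ha.lt_or_eq with ha | rfl
  · exact ((tendsto_add_mul_nhdsGT_zero a b).eventually (gt_mem_nhds ha)).mono fun _ => le_of_lt
  · filter_upwards [self_mem_nhdsWithin] with t ht
    simpa using mul_nonpos_of_nonneg_of_nonpos (le_of_lt ht) (hb rfl).le

section QuadraticProgram

variable {m n p : Type*} [Fintype n]

noncomputable def qpObjective (Q : Matrix n n ℝ) (q x : n → ℝ) : ℝ :=
  (1 / 2) * (x ⬝ᵥ Q *ᵥ x) + q ⬝ᵥ x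

def qpFeasibleSet (G : Matrix m n ℝ) (h : m → ℝ) (A : Matrix p n ℝ) (b : p → ℝ) :
    Set (n → ℝ) :=
  {x | A *ᵥ x = b ∧ ∀ i, (G *ᵥ x) i ≤ h i}

theorem qpObjective_add_smul {Q : Matrix n n ℝ} (hQ : Q.IsSymm) (q x d : n → ℝ) (t : ℝ) :
    qpObjective Q q (x + t • d) =
      qpObjective Q q x + t * ((Q *ᵥ x + q) ⬝ᵥ d) + t ^ 2 / 2 * (d ⬝ᵥ Q *ᵥ d) := by
  have hsymm : x ⬝ᵥ Q *ᵥ d = d ⬝ᵥ Q *ᵥ x := by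
    rw [dotProduct_mulVec, ← mulVec_transpose, hQ.eq, dotProduct_comm]
  simp only [qpObjective, mulVec_add, mulVec_smul, dotProduct_add, add_dotProduct,
    dotProduct_smul, smul_dotProduct, smul_eq_mul, hsymm, dotProduct_comm (Q *ᵥ x) d]
  ring

theorem dotProduct_nonneg_of_isMinOn_qpObjective {Q : Matrix n n ℝ} (hQ : Q.IsSymm)
    {q x d : n → ℝ} {S : Set (n → ℝ)} (hmin : IsMinOn (qpObjective Q q) S x)
    (hd : ∀ᶠ t : ℝ in 𝓝[>] 0, x + t • d ∈ S) : 0 ≤ (Q *ᵥ x + q) ⬝ᵥ d := by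
  refine nonneg_of_eventually_nhdsGT_zero_nonneg_add_mul (b := (d ⬝ᵥ Q *ᵥ d) / 2) ?_
  filter_upwards [hd, self_mem_nhdsWithin] with t hxt (ht : 0 < t)
  have := isMinOn_iff.1 hmin _ hxt
  rw [qpObjective_add_smul hQ] at this
  refine (mul_nonneg_iff_of_pos_left ht).1 ?_
  linear_combination this

theorem eventually_add_smul_mem_qpFeasibleSet [Finite m] {G : Matrix m n ℝ} {h : m → ℝ}
    {A : Matrix p n ℝ} {b : p → ℝ} {x v : n → ℝ} (hx : x ∈ qpFeasibleSet G h A b)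
    (hAv : A *ᵥ v = 0) (hGv : ∀ i, (G *ᵥ x) i = h i → (G *ᵥ v) i < 0) :
    ∀ᶠ t : ℝ in 𝓝[>] 0, x + t • v ∈ qpFeasibleSet G h A b := by
  have hG : ∀ᶠ t in 𝓝[>] (0 : ℝ), ∀ i, (G *ᵥ x) i - h i + t * (G *ᵥ v) i ≤ 0 :=
    eventually_all.2 fun i => eventually_nhdsGT_zero_add_mul_nonpos (sub_nonpos.2 (hx.2 i))
      fun hi => hGv i (sub_eq_zero.1 hi)
  filter_upwards [hG] with t ht
  refine ⟨by simp [mulVec_add, mulVec_smul, hx.1, hAv], fun i => ?_⟩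
  simpa [mulVec_add, mulVec_smul] using (by linarith [ht i] :
    (G *ᵥ x) i + t * (G *ᵥ v) i ≤ h i)

/-- Slater's point `xbar` turns directions that only weakly decrease the active constraints into
limits of strictly feasible directions `d + ε • (xbar - x)`. -/
theorem dotProduct_nonneg_of_isMinOn_qpObjective_of_slater [Finite m] {Q : Matrix n n ℝ}
    (hQ : Q.IsSymm) {q : n → ℝ} {G : Matrix m n ℝ} {h : m → ℝ} {A : Matrix p n ℝ} {b : p → ℝ}
    {x : n → ℝ} (hmin : IsMinOn (qpObjective Q q) (qpFeasibleSet G h A b) x)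
    (hx : x ∈ qpFeasibleSet G h A b)
    (hslater : ∃ xbar : n → ℝ, A *ᵥ xbar = b ∧ ∀ i, (G *ᵥ xbar) i < h i) {d : n → ℝ}
    (hAd : A *ᵥ d = 0) (hGd : ∀ i, (G *ᵥ x) i = h i → (G *ᵥ d) i ≤ 0) :
    0 ≤ (Q *ᵥ x + q) ⬝ᵥ d := by
  obtain ⟨xbar, hAxbar, hGxbar⟩ := hslater
  refine nonneg_of_eventually_nhdsGT_zero_nonneg_add_mul (b := (Q *ᵥ x + q) ⬝ᵥ (xbar - x)) ?_
  filter_upwards [self_mem_nhdsWithin] with ε (hε : 0 < ε)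
  rw [← smul_eq_mul, ← dotProduct_smul, ← dotProduct_add]
  refine dotProduct_nonneg_of_isMinOn_qpObjective hQ hmin
    (eventually_add_smul_mem_qpFeasibleSet hx ?_ fun i hi => ?_)
  · simp [mulVec_add, mulVec_smul, mulVec_sub, hAd, hAxbar, hx.1]
  · have : (G *ᵥ (d + ε • (xbar - x))) i = (G *ᵥ d) i + ε * ((G *ᵥ xbar) i - h i) := by
      simp [mulVec_add, mulVec_smul, mulVec_sub, hi]
    rw [this]
    nlinarith [hGd i hi, hGxbar i]

end QuadraticProgram

theorem kkt_necessity_convex_qp_slater {n m p : ℕ}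
    (Q : Matrix (Fin n) (Fin n) ℝ) (hQ : Q.PosSemidef)
    (q : Fin n → ℝ)
    (G : Matrix (Fin m) (Fin n) ℝ) (h : Fin m → ℝ)
    (A : Matrix (Fin p) (Fin n) ℝ) (b : Fin p → ℝ)
    (hslater : ∃ xbar : Fin n → ℝ, A *ᵥ xbar = b ∧ ∀ i, (G *ᵥ xbar) i < h i)
    (xs : Fin n → ℝ)
    (hfeas_eq : A *ᵥ xs = b) (hfeas_ineq : ∀ i, (G *ᵥ xs) i ≤ h i)
    (hopt : ∀ x : Fin n → ℝ, A *ᵥ x = b → (∀ i, (G *ᵥ x) i ≤ h i) →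
      (1/2) * (xs ⬝ᵥ Q *ᵥ xs) + q ⬝ᵥ xs ≤ (1/2) * (x ⬝ᵥ Q *ᵥ x) + q ⬝ᵥ x) :
    ∃ (lam : Fin m → ℝ) (nu : Fin p → ℝ),
      (∀ i, 0 ≤ lam i) ∧
      Q *ᵥ xs + q + Aᵀ *ᵥ nu + Gᵀ *ᵥ lam = 0 ∧
      (∀ i, lam i * ((G *ᵥ xs) i - h i) = 0) := by
  have hmin : IsMinOn (qpObjective Q q) (qpFeasibleSet G h A b) xs :=
    isMinOn_iff.2 fun x hx => hopt x hx.1 hx.2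
  obtain ⟨lam, nu, hlam, hinactive, hstat⟩ :=
    Matrix.exists_nonneg_add_transpose_mulVec_eq_zero_of_forall G A
      (Finset.univ.filter fun i => (G *ᵥ xs) i = h i) (Q *ᵥ xs + q) fun d hAd hGd =>
        dotProduct_nonneg_of_isMinOn_qpObjective_of_slater (isHermitian_iff_isSymm.1 hQ.1) hmin
          ⟨hfeas_eq, hfeas_ineq⟩ hslater hAd fun i hi => hGd i (by simpa using hi)
  refine ⟨lam, nu, hlam, hstat, fun i => ?_⟩
  by_cases hi : (G *ᵥ xs) i = h i
  · rw [hi, sub_self, mul_zero]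
  · rw [hinactive i (by simpa using hi), zero_mul]
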